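/- arXiv:1012.2480 — 4 statements merged into one kernel-verified Lean document; each statement's English description precedes it below -/
import Mathlib

section
/- Let α be a type and let x, y, z be permutations of α, each of which is a transposition (a swap of two distinct points). Then the subgroup of the permutation group of α generated by x, y and z is solvable. (This is the Table 1 entry for G0 ≅ Aₙ and x a transposition: any three conjugates of a transposition generate a solvable group.) -/
/-!
Each transposition moves two points, and three such pairs can always be distributed over two
disjoint blocks `s`, `t` of at most four points: two pairs that meet span at most three points,
so together with the third pair they form one block (if it meets them) or two; and if the pairs
are pairwise disjoint, two of them form one block and the third the other. The group generated
then lies in the image of `Perm s × Perm t`, which is solvable because `S₄` is: its subgroups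
`A₄ = ker sign` and `V₄ = [A₄, A₄]` give a series with abelian factors.
-/

open Equiv Finset

theorem alternatingGroup.isSolvable_of_card_eq_four {α : Type*} [DecidableEq α] [Fintype α]
    (hα : Nat.card α = 4) : Group.IsSolvable (alternatingGroup α) := by
  have : IsKleinFour (commutator (alternatingGroup α)) :=
    kleinFour_eq_commutator hα ▸ kleinFour_isKleinFour hα
  have : Group.IsSolvable (commutator (alternatingGroup α)) :=
    Group.isSolvable_of_comm IsKleinFour.isMulCommutative.is_comm.comm
  exact Group.isSolvable_of_ker_le_range (commutator _).subtype Abelianization.of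
    ((Abelianization.ker_of (G := alternatingGroup α)).trans (Subgroup.range_subtype _).symm).le

theorem Equiv.Perm.isSolvable_of_card_le_four {β : Type*} [Finite β] (h : Nat.card β ≤ 4) :
    Group.IsSolvable (Perm β) := by
  have : Group.IsSolvable (alternatingGroup (Fin 4)) :=
    alternatingGroup.isSolvable_of_card_eq_four (by simp)
  have : Group.IsSolvable (Perm (Fin 4)) :=
    Group.isSolvable_of_ker_le_range (alternatingGroup (Fin 4)).subtype sign
      (Subgroup.range_subtype _).ge
  have := Fintype.ofFinite β
  obtain ⟨e⟩ : Nonempty (β ↪ Fin 4) :=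
    Function.Embedding.nonempty_of_card_le (by simpa [Nat.card_eq_fintype_card] using h)
  exact Group.isSolvable_of_isSolvable_injective (Perm.viaEmbeddingHom_injective e)

namespace Finset

variable {α : Type*} [DecidableEq α] {A B C : Finset α}

theorem exists_blocks_of_not_disjoint (hA : #A ≤ 2) (hB : #B ≤ 2) (hC : #C ≤ 2)
    (hAB : ¬Disjoint A B) :
    ∃ s t : Finset α, Disjoint s t ∧ #s ≤ 4 ∧ #t ≤ 4 ∧ A ⊆ s ∧ B ⊆ s ∧ (C ⊆ s ∨ C ⊆ t) := by
  have hAB₃ : #(A ∪ B) ≤ 3 := by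
    have := card_union_add_card_inter A B
    have := (not_disjoint_iff_nonempty_inter.1 hAB).card_pos
    omega
  by_cases hABC : Disjoint (A ∪ B) C
  · exact ⟨A ∪ B, C, hABC, by omega, by omega, subset_union_left, subset_union_right,
      .inr subset_rfl⟩
  · have := card_union_add_card_inter (A ∪ B) C
    have := (not_disjoint_iff_nonempty_inter.1 hABC).card_pos
    exact ⟨A ∪ B ∪ C, ∅, disjoint_empty_right _, by omega, by simp,
      subset_union_left.trans subset_union_left, subset_union_right.trans subset_union_left,
      .inl subset_union_right⟩

theorem exists_blocks_of_card_le_two (hA : #A ≤ 2) (hB : #B ≤ 2) (hC : #C ≤ 2) :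
    ∃ s t : Finset α, Disjoint s t ∧ #s ≤ 4 ∧ #t ≤ 4 ∧
      (A ⊆ s ∨ A ⊆ t) ∧ (B ⊆ s ∨ B ⊆ t) ∧ (C ⊆ s ∨ C ⊆ t) := by
  obtain hAB | hAB := em' (Disjoint A B)
  · obtain ⟨s, t, hst, hs, ht, hAs, hBs, hCst⟩ := exists_blocks_of_not_disjoint hA hB hC hAB
    exact ⟨s, t, hst, hs, ht, .inl hAs, .inl hBs, hCst⟩
  obtain hAC | hAC := em' (Disjoint A C)
  · obtain ⟨s, t, hst, hs, ht, hAs, hCs, hBst⟩ := exists_blocks_of_not_disjoint hA hC hB hAC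
    exact ⟨s, t, hst, hs, ht, .inl hAs, hBst, .inl hCs⟩
  obtain hBC | hBC := em' (Disjoint B C)
  · obtain ⟨s, t, hst, hs, ht, hBs, hCs, hAst⟩ := exists_blocks_of_not_disjoint hB hC hA hBC
    exact ⟨s, t, hst, hs, ht, hAst, .inl hBs, .inl hCs⟩
  · exact ⟨A ∪ B, C, disjoint_union_left.2 ⟨hAC, hBC⟩, (card_union_le A B).trans (by omega),
      by omega, .inl subset_union_left, .inl subset_union_right, .inr subset_rfl⟩

end Finset

namespace Equiv.Perm

variable {α : Type*} [DecidableEq α] {s t : Finset α}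

theorem commute_ofSubtype_of_disjoint (hst : _root_.Disjoint s t) (g : Perm s) (h : Perm t) :
    Commute (ofSubtype g) (ofSubtype h) := by
  refine Disjoint.commute fun a => ?_
  by_cases has : a ∈ s
  · exact .inr (ofSubtype_apply_of_not_mem h (disjoint_left.1 hst has))
  · exact .inl (ofSubtype_apply_of_not_mem g has)

theorem isSolvable_sup_range_ofSubtype (hst : _root_.Disjoint s t) (hs : #s ≤ 4) (ht : #t ≤ 4) :
    Group.IsSolvable ↥((ofSubtype : Perm s →* Perm α).range ⊔
      (ofSubtype : Perm t →* Perm α).range) := by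
  have : Group.IsSolvable (Perm s) := isSolvable_of_card_le_four (by simpa using hs)
  have : Group.IsSolvable (Perm t) := isSolvable_of_card_le_four (by simpa using ht)
  rw [← MonoidHom.noncommCoprod_range ofSubtype ofSubtype (commute_ofSubtype_of_disjoint hst)]
  exact Group.isSolvable_of_surjective (MonoidHom.rangeRestrict_surjective _)

theorem swap_mem_sup_range_ofSubtype {a b : α} (h : {a, b} ⊆ s ∨ {a, b} ⊆ t) :
    swap a b ∈ (ofSubtype : Perm s →* Perm α).range ⊔ (ofSubtype : Perm t →* Perm α).range := by
  rcases h with h | h <;> rw [insert_subset_iff, singleton_subset_iff] at h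
  · exact Subgroup.mem_sup_left ⟨swap ⟨a, h.1⟩ ⟨b, h.2⟩, ofSubtype_swap_eq _ _⟩
  · exact Subgroup.mem_sup_right ⟨swap ⟨a, h.1⟩ ⟨b, h.2⟩, ofSubtype_swap_eq _ _⟩

end Equiv.Perm

/-- **Table 1, `G0 ≅ Aₙ`, transposition entry.** Any three transpositions in a
permutation group generate a solvable group. -/
theorem isSolvable_closure_of_three_swaps
    (α : Type*) [DecidableEq α] (x y z : Equiv.Perm α)
    (hx : x.IsSwap) (hy : y.IsSwap) (hz : z.IsSwap) :
    IsSolvable (Subgroup.closure {x, y, z}) := by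
  obtain ⟨a, b, -, rfl⟩ := hx
  obtain ⟨c, d, -, rfl⟩ := hy
  obtain ⟨e, f, -, rfl⟩ := hz
  obtain ⟨s, t, hst, hs, ht, hab, hcd, hef⟩ :=
    exists_blocks_of_card_le_two (card_le_two (a := a) (b := b)) (card_le_two (a := c) (b := d))
      (card_le_two (a := e) (b := f))
  have := Perm.isSolvable_sup_range_ofSubtype hst hs ht
  have hle : Subgroup.closure {swap a b, swap c d, swap e f} ≤
      (Perm.ofSubtype : Perm s →* Perm α).range ⊔ (Perm.ofSubtype : Perm t →* Perm α).range := by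
    simp only [Subgroup.closure_le, Set.insert_subset_iff, Set.singleton_subset_iff]
    exact ⟨Perm.swap_mem_sup_range_ofSubtype hab, Perm.swap_mem_sup_range_ofSubtype hcd,
      Perm.swap_mem_sup_range_ofSubtype hef⟩
  exact Group.isSolvable_of_isSolvable_injective (Subgroup.inclusion_injective hle)
end

section
/- Let x, y, z be permutations of a 6-element set (Equiv.Perm (Fin 6)), each of which is a product of three pairwise disjoint transpositions (cycle type 2³, a 'triple transposition'). Then the subgroup generated by x, y and z is solvable. (This is the Table 1 entry for G0 ≅ A₆ and x a triple transposition, restricted to conjugates inside S₆.) -/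
/-!
Under the outer automorphism of `S₆` triple transpositions correspond to transpositions, and any
three transpositions of six points commute with a common transposition (one disjoint from or equal
to each of them). Dually, `x`, `y`, `z` commute with a common triple transposition `s`; we check
this by computation after conjugating `x` to `(0 1)(2 3)(4 5)`. The centralizer of `s` permutes
the three 2-cycles of `s`, with abelian kernel generated by those 2-cycles, and the image lies in
`S₃`, which has squarefree order; hence the centralizer, and with it `⟨x, y, z⟩`, is solvable.
-/

open Equiv Equiv.Perm Equiv.Perm.OnCycleFactors Subgroup

namespace Equiv.Perm

theorem isSolvable_of_nat_card_le_three {β : Type*} [Finite β] (h : Nat.card β ≤ 3) :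
    Group.IsSolvable (Perm β) := by
  have : IsZGroup (Perm β) := IsZGroup.of_squarefree <| by
    rw [Nat.card_perm]
    interval_cases Nat.card β <;> decide +kernel
  infer_instance

section Centralizer

variable {α : Type*} [Fintype α] [DecidableEq α]

open scoped IsMulCommutative in
theorem isSolvable_centralizer (g : Perm α) [Group.IsSolvable (Perm g.cycleFactorsFinset)]
    [Group.IsSolvable (Perm (Function.fixedPoints g))] : Group.IsSolvable (centralizer {g}) := by
  let kerToCentralizer :=
    (kerParam g).codRestrict _ fun p => kerParam_range_le_centralizer ⟨p, rfl⟩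
  refine Group.isSolvable_of_ker_le_range kerToCentralizer (toPermHom g) fun k hk => ?_
  obtain ⟨p, hp⟩ : (k : Perm α) ∈ (kerParam g).range :=
    (kerParam_range_eq (g := g)) ▸ ⟨k, hk, rfl⟩
  exact ⟨p, Subtype.ext hp⟩

theorem isSolvable_centralizer_of_card_cycleType_le_three (g : Perm α)
    (hcycles : Multiset.card g.cycleType ≤ 3) (hfixed : Fintype.card α - g.cycleType.sum ≤ 3) :
    Group.IsSolvable (centralizer {g}) := by
  have : Group.IsSolvable (Perm g.cycleFactorsFinset) := isSolvable_of_nat_card_le_three <| by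
    simpa [cycleType_def] using hcycles
  have : Group.IsSolvable (Perm (Function.fixedPoints g)) := isSolvable_of_nat_card_le_three <| by
    rwa [Nat.card_eq_fintype_card, card_fixedPoints]
  exact isSolvable_centralizer g

end Centralizer

theorem cycleType_eq_two_two_two_iff {σ : Perm (Fin 6)} :
    σ.cycleType = {2, 2, 2} ↔ σ ^ 2 = 1 ∧ ∀ i, σ i ≠ i := by
  have hsupport : σ.support = Finset.univ ↔ ∀ i, σ i ≠ i := by
    simp [Finset.eq_univ_iff_forall]
  rw [← hsupport, ← Finset.card_eq_iff_eq_univ, ← sum_cycleType, Fintype.card_fin]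
  constructor
  · intro h
    refine ⟨?_, by rw [h]; rfl⟩
    rw [← orderOf_dvd_iff_pow_eq_one, ← lcm_cycleType, h]
    decide
  · rintro ⟨hsq, hsum⟩
    have hne : σ ≠ 1 := by rintro rfl; simp at hsum
    have hord : orderOf σ = 2 := orderOf_eq_prime hsq hne
    obtain ⟨n, hn⟩ := cycleType_prime_order (hord ▸ Nat.prime_two)
    rw [hn, hord, Multiset.sum_replicate, smul_eq_mul] at hsum
    rw [hn, hord, show n = 2 by omega]
    rfl

def tripleTranspositions : List (Perm (Fin 6)) :=
  [swap 0 1 * swap 2 3 * swap 4 5, swap 0 1 * swap 2 4 * swap 3 5, swap 0 1 * swap 2 5 * swap 3 4,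
   swap 0 2 * swap 1 3 * swap 4 5, swap 0 2 * swap 1 4 * swap 3 5, swap 0 2 * swap 1 5 * swap 3 4,
   swap 0 3 * swap 1 2 * swap 4 5, swap 0 3 * swap 1 4 * swap 2 5, swap 0 3 * swap 1 5 * swap 2 4,
   swap 0 4 * swap 1 2 * swap 3 5, swap 0 4 * swap 1 3 * swap 2 5, swap 0 4 * swap 1 5 * swap 2 3,
   swap 0 5 * swap 1 2 * swap 3 4, swap 0 5 * swap 1 3 * swap 2 4, swap 0 5 * swap 1 4 * swap 2 3]

theorem mem_tripleTranspositions_iff {w : Perm (Fin 6)} :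
    w ∈ tripleTranspositions ↔ w.cycleType = {2, 2, 2} := by
  rw [cycleType_eq_two_two_two_iff]
  revert w
  decide +kernel

theorem exists_mem_tripleTranspositions_commute :
    ∀ y ∈ tripleTranspositions, ∀ z ∈ tripleTranspositions, ∃ s ∈ tripleTranspositions,
      s * (swap 0 1 * swap 2 3 * swap 4 5) = swap 0 1 * swap 2 3 * swap 4 5 * s ∧
        s * y = y * s ∧ s * z = z * s := by
  decide +kernel

theorem exists_cycleType_eq_commute {x y z : Perm (Fin 6)} (hx : x.cycleType = {2, 2, 2})
    (hy : y.cycleType = {2, 2, 2}) (hz : z.cycleType = {2, 2, 2}) :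
    ∃ s : Perm (Fin 6), s.cycleType = {2, 2, 2} ∧ Commute s x ∧ Commute s y ∧ Commute s z := by
  have hx₀ : (swap 0 1 * swap 2 3 * swap 4 5 : Perm (Fin 6)).cycleType = {2, 2, 2} :=
    mem_tripleTranspositions_iff.mp List.mem_cons_self
  obtain ⟨c, rfl⟩ := isConj_iff.mp (isConj_iff_cycleType_eq.mpr (hx₀.trans hx.symm))
  have hconj {w : Perm (Fin 6)} (hw : w.cycleType = {2, 2, 2}) :
      c⁻¹ * w * c ∈ tripleTranspositions := by
    rw [mem_tripleTranspositions_iff, ← hw, ← cycleType_conj (τ := c), ← inv_inv c]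
    group
  obtain ⟨s, hs, hsx, hsy, hsz⟩ :=
    exists_mem_tripleTranspositions_commute _ (hconj hy) _ (hconj hz)
  refine ⟨c * s * c⁻¹, cycleType_conj.trans (mem_tripleTranspositions_iff.mp hs),
    ?_, ?_, ?_⟩
  · exact (show Commute s _ from hsx).map (MulAut.conj c)
  · simpa [mul_assoc] using (show Commute s _ from hsy).map (MulAut.conj c)
  · simpa [mul_assoc] using (show Commute s _ from hsz).map (MulAut.conj c)

end Equiv.Perm

/-- **Table 1, `G0 ≅ A₆`, triple transposition entry.** Any three permutations of
6 points of cycle type `2³` generate a solvable group. -/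
theorem isSolvable_closure_of_three_triple_transpositions
    (x y z : Equiv.Perm (Fin 6))
    (hx : x.cycleType = {2, 2, 2}) (hy : y.cycleType = {2, 2, 2})
    (hz : z.cycleType = {2, 2, 2}) :
    IsSolvable (Subgroup.closure {x, y, z}) := by
  obtain ⟨s, hs, hsx, hsy, hsz⟩ := exists_cycleType_eq_commute hx hy hz
  have hle : closure {x, y, z} ≤ centralizer {s} := by
    simp only [closure_le, Set.insert_subset_iff, Set.singleton_subset_iff, SetLike.mem_coe,
      mem_centralizer_singleton_iff]
    exact ⟨hsx.eq.symm, hsy.eq.symm, hsz.eq.symm⟩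
  have : Group.IsSolvable (centralizer {s}) :=
    isSolvable_centralizer_of_card_cycleType_le_three s (by rw [hs]; rfl) (by rw [hs]; decide)
  exact Group.isSolvable_of_isSolvable_injective (inclusion_injective hle)
end

section
/- Let d ≥ 2 and let y ∈ GL(d, 𝔽₃) be an invertible d × d matrix over the field with three elements. Suppose y² = ε·t, where ε ∈ {1, −1} and t is a transvection, i.e., t ≠ 1, (t − 1)² = 0 and the matrix t − 1 has rank 1. Then y⁶ ≠ −1. (This is the content of Lemma 5.1 in the linear case: an element of PGL(d, 3) of order 6 whose square is the image of a transvection lifts to an element of order 6 in GL(d, 3).) -/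
/-- **Lemma 5.1, linear case.** If `y ∈ GL(d, 𝔽₃)` satisfies `y² = ε⬝t` with `ε = ±1`
and `t` a transvection, then `y⁶ ≠ -1`; hence an order-6 element of `PGL(d,3)` whose
square is the image of a transvection lifts to an element of order 6 in `GL(d,3)`. -/
theorem pow_six_ne_neg_one_of_sq_smul_transvection
    (d : ℕ) (hd : 2 ≤ d) (y : GL (Fin d) (ZMod 3))
    (ε : ZMod 3) (hε : ε = 1 ∨ ε = -1)
    (t : Matrix (Fin d) (Fin d) (ZMod 3))
    (ht1 : t ≠ 1) (ht2 : (t - 1) ^ 2 = 0) (ht3 : (t - 1).rank = 1)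
    (hy : (↑y : Matrix (Fin d) (Fin d) (ZMod 3)) ^ 2 = ε • t) :
    (↑y : Matrix (Fin d) (Fin d) (ZMod 3)) ^ 6 ≠ -1 := by
  have hne : Nonempty (Fin d) := ⟨⟨0, by omega⟩⟩
  set M : Matrix (Fin d) (Fin d) (ZMod 3) := (↑y : Matrix (Fin d) (Fin d) (ZMod 3)) with hM
  have h3 : (3 : Matrix (Fin d) (Fin d) (ZMod 3)) = 0 := CharP.cast_eq_zero _ 3
  -- t ^ 3 = 1
  have ht3' : (t - 1) ^ 3 = 0 := by
    rw [pow_succ, ht2, zero_mul]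
  have hcube : t ^ 3 = 1 := by
    have e : t ^ 3 = 1 + 3 * (t - 1) + 3 * (t - 1) ^ 2 + (t - 1) ^ 3 := by noncomm_ring
    rw [e, ht2, ht3', h3, zero_mul, mul_zero]
    abel
  rcases hε with h1 | h1
  · -- ε = 1 : y ^ 6 = 1 ≠ -1
    subst h1
    rw [one_smul] at hy
    have h6 : M ^ 6 = 1 := by
      have : M ^ 6 = (M ^ 2) ^ 3 := by rw [← pow_mul]
      rw [this, hy, hcube]
    rw [h6]
    intro h
    have := congrFun (congrFun h ⟨0, by omega⟩) ⟨0, by omega⟩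
    simp [Matrix.one_apply] at this
    exact absurd this (by decide)
  · -- ε = -1 : derive a contradiction
    subst h1
    rw [neg_smul, one_smul] at hy
    exfalso
    set n : Matrix (Fin d) (Fin d) (ZMod 3) := t - 1 with hn
    have hMsq : M ^ 2 = -1 - n := by rw [hy, hn]; abel
    have hcomm : M * n = n * M := by
      have : n = -1 - M ^ 2 := by rw [hMsq]; abel
      rw [this]; noncomm_ring
    -- n ≠ 0
    have hnne : n ≠ 0 :=
      fun h => ht1 (sub_eq_zero.mp h)
    obtain ⟨i, j, hij⟩ : ∃ i j, n i j ≠ 0 := by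
      by_contra h
      push_neg at h
      exact hnne (by ext i j; simpa using h i j)
    set w : Fin d → ZMod 3 := Pi.single j 1 with hw
    set v : Fin d → ZMod 3 := n.mulVec w with hv
    have hvi : v i ≠ 0 := by
      have : v i = n i j := by
        simp [hv, hw, Matrix.mulVec, dotProduct, Pi.single_apply]
      rwa [this]
    have hvne : v ≠ 0 := fun h => hvi (by rw [h]; rfl)
    -- v is in the range of n.mulVecLin
    have hvmem : v ∈ LinearMap.range n.mulVecLin := ⟨w, rfl⟩
    -- n.mulVec v = 0
    have hnv : n.mulVec v = 0 := by
      rw [hv, Matrix.mulVec_mulVec, ← pow_two, ht2]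
      simp
    -- M.mulVec v is in the range
    have hMvmem : M.mulVec v ∈ LinearMap.range n.mulVecLin := by
      refine ⟨M.mulVec w, ?_⟩
      rw [Matrix.mulVecLin_apply, Matrix.mulVec_mulVec, ← hcomm, ← Matrix.mulVec_mulVec]
    -- the range is 1-dimensional, spanned by v
    have hrank : Module.finrank (ZMod 3) (LinearMap.range n.mulVecLin) = 1 := ht3
    have hvz : (⟨v, hvmem⟩ : LinearMap.range n.mulVecLin) ≠ 0 := by
      intro h
      exact hvne (congrArg Subtype.val h)
    obtain ⟨c, hc⟩ := (finrank_eq_one_iff_of_nonzero' (⟨v, hvmem⟩ : LinearMap.range n.mulVecLin) hvz).mp hrank ⟨M.mulVec v, hMvmem⟩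
    have hc' : c • v = M.mulVec v := congrArg Subtype.val hc
    -- M² v = c² v
    have h1 : (M ^ 2).mulVec v = (c * c) • v := by
      rw [pow_two, ← Matrix.mulVec_mulVec, ← hc', Matrix.mulVec_smul, ← hc', smul_smul]
    -- M² v = -v
    have h2 : (M ^ 2).mulVec v = -v := by
      rw [hMsq, Matrix.sub_mulVec, Matrix.neg_mulVec, Matrix.one_mulVec, hnv]
      simp
    have h3' : (c * c) • v = -v := h1 ▸ h2
    have := congrFun h3' i
    have hcc : (c * c + 1) * v i = 0 := by
      have : (c * c) * v i = -v i := this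
      linear_combination this
    have hcc1 : c * c + 1 = 0 := by
      rcases mul_eq_zero.mp hcc with h | h
      · exact h
      · exact absurd h hvi
    exact (by decide : ∀ c : ZMod 3, c * c + 1 ≠ 0) c hcc1
end

section
/- Let G be a finite group, let X be a subgroup of G that is self-normalizing (the normalizer of X in G equals X), and let x ∈ G. Then the number of G-conjugates gXg⁻¹ of X that contain x, multiplied by the size of the conjugacy class x^G of x, equals |x^G ∩ X| · [G : X]. (This is the counting identity n_i/[G : X] = |x^G ∩ X|/|x^G| used in the proof of the counting lemma.) -/
/-!
Count the incidences `z ∈ H` between the conjugacy class of `x` and the conjugates of `X`.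
Conjugation permutes both families and preserves incidence, so every element of `x^G` lies in
as many conjugates of `X` as `x` does, and every conjugate of `X` meets `x^G` in `|x^G ∩ X|`
elements. Since `X` is self-normalizing, it has exactly `[G : X]` conjugates.
-/

open MulAction Pointwise

namespace MulAction

variable {G α β : Type*} [Group G] [MulAction G α] [MulAction G β]

theorem card_setOf_smul_mem (a : α) (s : Set α) :
    Nat.card {g : G | g • a ∈ s} = Nat.card ↥(orbit G a ∩ s) * Nat.card (stabilizer G a) := by
  let e := (orbitEquivQuotientStabilizer G a).symm
  have hpre : {g : G | g • a ∈ s} = QuotientGroup.mk ⁻¹' {q | (e q : α) ∈ s} := rfl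
  have hset : {q | (e q : α) ∈ s} ≃ ↥(orbit G a ∩ s) :=
    (e.subtypeEquiv (q := fun p : orbit G a => (p : α) ∈ s) fun _ => Iff.rfl).trans
      (Equiv.subtypeSubtypeEquivSubtypeInter (· ∈ orbit G a) (· ∈ s))
  rw [hpre, Nat.card_congr (QuotientGroup.preimageMkEquivSubgroupProdSet _ _), Nat.card_prod,
    Nat.card_congr hset, mul_comm]

variable (G) in
theorem card_orbit_mul_card_stabilizer (a : α) :
    Nat.card (orbit G a) * Nat.card (stabilizer G a) = Nat.card G := by
  rw [Subgroup.card_eq_card_quotient_mul_card_subgroup (stabilizer G a),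
    Nat.card_congr (orbitEquivQuotientStabilizer G a)]

theorem card_orbit_mul_card_orbit_inter_setOf [Finite G] {R : α → β → Prop}
    (hR : ∀ (g : G) a b, R (g • a) (g • b) ↔ R a b) (a : α) (b : β) :
    Nat.card (orbit G a) * Nat.card ↥(orbit G b ∩ {b' | R a b'})
      = Nat.card (orbit G b) * Nat.card ↥(orbit G a ∩ {a' | R a' b}) := by
  have key : Nat.card ↥(orbit G b ∩ {b' | R a b'}) * Nat.card (stabilizer G b)
      = Nat.card ↥(orbit G a ∩ {a' | R a' b}) * Nat.card (stabilizer G a) := by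
    rw [← card_setOf_smul_mem, ← card_setOf_smul_mem]
    refine Nat.card_congr ((Equiv.inv G).subtypeEquiv fun g => ?_)
    simpa using (hR g⁻¹ a (g • b)).symm
  refine Nat.eq_of_mul_eq_mul_right (Nat.card_pos (α := stabilizer G b)) ?_
  calc _ = Nat.card (orbit G a) * (Nat.card ↥(orbit G a ∩ {a' | R a' b})
          * Nat.card (stabilizer G a)) := by rw [mul_assoc, key]
    _ = Nat.card ↥(orbit G a ∩ {a' | R a' b}) * Nat.card G := by
      rw [← card_orbit_mul_card_stabilizer G a]; ring
    _ = _ := by rw [← card_orbit_mul_card_stabilizer G b]; ring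

end MulAction

section ConjAct

variable {G : Type*} [Group G]

theorem ConjAct.orbit_eq_setOf_conj (x : G) :
    orbit (ConjAct G) x = {z | ∃ g : G, g⁻¹ * x * g = z} := by
  ext z
  simp only [mem_orbit_iff, ConjAct.smul_def, Set.mem_ofPred_eq]
  constructor
  · rintro ⟨c, rfl⟩
    exact ⟨(ConjAct.ofConjAct c)⁻¹, by group⟩
  · rintro ⟨g, rfl⟩
    exact ⟨ConjAct.toConjAct g⁻¹, by simp⟩

theorem Subgroup.orbit_conjAct_eq (X : Subgroup G) :
    orbit (ConjAct G) X = {H | ∃ g : G, H = X.map (MulAut.conj g).toMonoidHom} := by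
  ext H
  constructor
  · rintro ⟨c, rfl⟩
    exact ⟨ConjAct.ofConjAct c, rfl⟩
  · rintro ⟨g, rfl⟩
    exact ⟨ConjAct.toConjAct g, rfl⟩

theorem Subgroup.card_orbit_conjAct (X : Subgroup G) :
    Nat.card (orbit (ConjAct G) X) = (normalizer (X : Set G)).index := by
  have hstab : stabilizer (ConjAct G) X
      = (normalizer (X : Set G)).comap (G := ConjAct G) ConjAct.ofConjAct.toMonoidHom := by
    ext c
    exact conjAct_pointwise_smul_iff (g := ConjAct.ofConjAct c)
  rw [Nat.card_coe_set_eq, ← index_stabilizer, hstab,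
    index_comap_of_surjective _ ConjAct.ofConjAct.surjective]

end ConjAct

/-- **Counting identity** used in the proof of the counting lemma: if `X` is a
self-normalizing subgroup of the finite group `G`, then the number of conjugates of
`X` containing `x`, times `|x^G|`, equals `|x^G ∩ X| ⬝ [G : X]`. -/
theorem card_conjugates_containing_mul_card_conjClass
    (G : Type*) [Group G] [Finite G] (X : Subgroup G) (hX : Subgroup.normalizer (X : Set G) = X) (x : G) :
    Nat.card {H : Subgroup G //
        (∃ g : G, H = Subgroup.map (MulAut.conj g).toMonoidHom X) ∧ x ∈ H}
      * Nat.card ({z : G | ∃ g : G, g⁻¹ * x * g = z})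
    = Nat.card ↥({z : G | ∃ g : G, g⁻¹ * x * g = z} ∩ (X : Set G)) * X.index := by
  have : Finite (ConjAct G) := inferInstanceAs (Finite G)
  have h := card_orbit_mul_card_orbit_inter_setOf (G := ConjAct G)
    (R := fun (z : G) (H : Subgroup G) => z ∈ H)
    (fun _ _ _ => Subgroup.smul_mem_pointwise_smul_iff) x X
  rw [Subgroup.card_orbit_conjAct, hX, ConjAct.orbit_eq_setOf_conj,
    Subgroup.orbit_conjAct_eq] at h
  rw [mul_comm, mul_comm _ X.index]
  exact h
end
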